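/- arXiv:2401.16088 — 2 statements merged into one kernel-verified Lean document; each statement's English description precedes it below -/
import Mathlib

section
/- Let X_a ~ N(μ_a, σ²) and X_d ~ N(μ_d, σ²) with μ_d < μ_a ≤ s. Then the expected distance to the decision boundary among negatively classified agents satisfies E[s − X_d | X_d < s] > E[s − X_a | X_a < s]; i.e., conditional on receiving a negative outcome, the disadvantaged population is farther in expectation from the threshold. -/
/-!
Translating by the mean, `E[s - X | X < s] = m (s - μ)` with `m t = E[t - Z | Z < t]` for
`Z ∼ 𝒩(0, v)`, so it suffices that `m` is strictly increasing. Let `φ`, `Φ` be the density and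
distribution function of `Z`. Since `φ' = -x φ / v`, one gets `∫_{x<t} x φ = -v φ t` and
`∫_{x<t} x² φ = v (Φ t - t φ t)`, so `m t = t + v φ t / Φ t` and `m'` has the sign of
`P = Φ² - φ (t Φ + v φ)`. Now `P → 0` at `-∞` and `P' = (φ / v) ∫_{x<t} (t - x)² φ(x) dx > 0`,
hence `P > 0`.
-/

open MeasureTheory ProbabilityTheory Set Filter Topology Real
open scoped NNReal

lemma pos_of_hasDerivAt_pos_of_tendsto_atBot {f f' : ℝ → ℝ} (hf : ∀ x, HasDerivAt f (f' x) x)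
    (hf' : ∀ x, 0 < f' x) (hlim : Tendsto f atBot (𝓝 0)) (t : ℝ) : 0 < f t := by
  have hmono := strictMono_of_hasDerivAt_pos hf hf'
  have h0 : 0 ≤ f (t - 1) := le_of_tendsto hlim <| by
    filter_upwards [eventually_le_atBot (t - 1)] with u hu using hmono.monotone hu
  linarith [hmono (sub_one_lt t)]

lemma setIntegral_Iio_pos {f : ℝ → ℝ} {t : ℝ} (hf : IntegrableOn f (Iio t))
    (hpos : ∀ x < t, 0 < f x) : 0 < ∫ x in Iio t, f x := by
  rw [setIntegral_pos_iff_support_of_nonneg_ae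
    ((ae_restrict_iff' measurableSet_Iio).2 (ae_of_all _ fun x hx => (hpos x hx).le)) hf,
    inter_eq_right.2 (show Iio t ⊆ f.support from fun x hx => (hpos x hx).ne'),
    Real.volume_Iio]
  exact ENNReal.zero_lt_top

lemma hasDerivAt_integral_Iio {f : ℝ → ℝ} (hf : Integrable f) {t : ℝ} (hc : ContinuousAt f t) :
    HasDerivAt (fun u => ∫ x in Iio u, f x) (f t) t := by
  have hsplit (u : ℝ) : ∫ x in Iio u, f x = (∫ x in Iic 0, f x) + ∫ x in (0 : ℝ)..u, f x := by
    rw [← integral_Iic_eq_integral_Iio,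
      ← intervalIntegral.integral_Iic_sub_Iic hf.integrableOn hf.integrableOn]
    ring
  simp_rw [hsplit]
  exact (intervalIntegral.integral_hasDerivAt_right hf.intervalIntegrable
    hf.aestronglyMeasurable.stronglyMeasurableAtFilter hc).const_add _

/-- `E[s - X | X < s]` for `X ∼ ν`. -/
noncomputable def meanGapBelow (ν : Measure ℝ) (s : ℝ) : ℝ :=
  (∫ x in Iio s, (s - x) ∂ν) / (ν (Iio s)).toReal

lemma meanGapBelow_map_add_const (ν : Measure ℝ) (μ s : ℝ) :
    meanGapBelow (ν.map (· + μ)) s = meanGapBelow ν (s - μ) := by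
  rw [meanGapBelow, meanGapBelow, (measurableEmbedding_addRight μ).setIntegral_map,
    Measure.map_apply (measurable_add_const μ) measurableSet_Iio, preimage_add_const_Iio]
  congr 2 with x
  ring

lemma setIntegral_gaussianReal {μ : ℝ} {v : ℝ≥0} (hv : v ≠ 0) {A : Set ℝ} (hA : MeasurableSet A)
    (f : ℝ → ℝ) :
    ∫ x in A, f x ∂gaussianReal μ v = ∫ x in A, f x * gaussianPDFReal μ v x := by
  rw [gaussianReal_of_var_ne_zero _ hv, restrict_withDensity hA,
    integral_withDensity_eq_integral_toReal_smul (measurable_gaussianPDF _ _)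
      (ae_of_all _ fun _ => gaussianPDF_lt_top)]
  simp only [toReal_gaussianPDF, smul_eq_mul, mul_comm]

lemma hasDerivAt_gaussianPDFReal (μ : ℝ) (v : ℝ≥0) (x : ℝ) :
    HasDerivAt (gaussianPDFReal μ v) (-((x - μ) / v) * gaussianPDFReal μ v x) x := by
  have h : HasDerivAt (fun y : ℝ => -(y - μ) ^ 2 / (2 * v)) (-((x - μ) / v)) x := by
    refine (((hasDerivAt_id' x).sub_const μ).fun_pow 2).fun_neg.div_const _ |>.congr_deriv ?_
    rw [← mul_div_mul_left (x - μ) (v : ℝ) two_ne_zero]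
    ring
  rw [gaussianPDFReal_def]
  exact (h.exp.const_mul _).congr_deriv (by ring)

lemma continuous_gaussianPDFReal (μ : ℝ) (v : ℝ≥0) : Continuous (gaussianPDFReal μ v) :=
  continuous_iff_continuousAt.2 fun x => (hasDerivAt_gaussianPDFReal μ v x).continuousAt

lemma integrable_pow_mul_gaussianPDFReal_zero {v : ℝ≥0} (hv : v ≠ 0) (n : ℕ) :
    Integrable (fun x => x ^ n * gaussianPDFReal 0 v x) := by
  have hb : (0 : ℝ) < (2 * v : ℝ)⁻¹ := by positivity
  refine ((integrable_rpow_mul_exp_neg_mul_sq hb (s := n)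
    (by linarith [n.cast_nonneg (α := ℝ)])).const_mul (√(2 * π * v))⁻¹).congr
    (ae_of_all _ fun x => ?_)
  simp only [gaussianPDFReal_def, Real.rpow_natCast, sub_zero]
  ring_nf

noncomputable def gaussianCDFReal (v : ℝ≥0) (t : ℝ) : ℝ := ∫ x in Iio t, gaussianPDFReal 0 v x

section Centered

variable {v : ℝ≥0}

local notation "φ" => gaussianPDFReal 0 v
local notation "Φ" => gaussianCDFReal v

lemma hasDerivAt_gaussianCDFReal (t : ℝ) : HasDerivAt Φ (φ t) t :=
  hasDerivAt_integral_Iio (integrable_gaussianPDFReal 0 v)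
    (continuous_gaussianPDFReal 0 v).continuousAt

lemma tendsto_gaussianCDFReal_atBot : Tendsto Φ atBot (𝓝 0) :=
  tendsto_integral_Iio_zero tendsto_id

lemma gaussianCDFReal_pos (hv : v ≠ 0) (t : ℝ) : 0 < Φ t :=
  setIntegral_Iio_pos (integrable_gaussianPDFReal 0 v).integrableOn
    fun x _ => gaussianPDFReal_pos 0 v x hv

lemma tendsto_gaussianPDFReal_zero_atBot (hv : v ≠ 0) : Tendsto φ atBot (𝓝 0) := by
  refine tendsto_zero_of_hasDerivAt_of_integrableOn_Iic (a := 0)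
    (fun x _ => hasDerivAt_gaussianPDFReal 0 v x) ?_
    (integrable_gaussianPDFReal 0 v).integrableOn
  refine ((integrable_pow_mul_gaussianPDFReal_zero hv 1).const_mul (-(v : ℝ)⁻¹)).integrableOn
    |>.congr_fun (fun x _ => ?_) measurableSet_Iic
  ring

lemma tendsto_mul_gaussianPDFReal_zero_atBot (hv : v ≠ 0) :
    Tendsto (fun x => x * φ x) atBot (𝓝 0) := by
  have hv' : (v : ℝ) ≠ 0 := by exact_mod_cast hv
  refine tendsto_zero_of_hasDerivAt_of_integrableOn_Iic (a := 0)
    (fun x _ => (hasDerivAt_id' x).mul (hasDerivAt_gaussianPDFReal 0 v x)) ?_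
    (by simpa using (integrable_pow_mul_gaussianPDFReal_zero hv 1).integrableOn)
  refine ((integrable_pow_mul_gaussianPDFReal_zero hv 0).sub
    ((integrable_pow_mul_gaussianPDFReal_zero hv 2).const_mul (v : ℝ)⁻¹)).integrableOn
    |>.congr_fun (fun x _ => ?_) measurableSet_Iic
  simp only [Pi.sub_apply]
  field_simp
  ring

lemma integral_Iio_mul_gaussianPDFReal_zero (hv : v ≠ 0) (t : ℝ) :
    ∫ x in Iio t, x * φ x = -(v * φ t) := by
  have hv' : (v : ℝ) ≠ 0 := by exact_mod_cast hv
  have hlim : Tendsto (fun x => -(v * φ x)) atBot (𝓝 0) := by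
    simpa using ((tendsto_gaussianPDFReal_zero_atBot hv).const_mul (v : ℝ)).neg
  have h := integral_Iic_of_hasDerivAt_of_tendsto' (a := t) (f' := fun x => x * φ x)
    (fun x _ => ((hasDerivAt_gaussianPDFReal 0 v x).const_mul (v : ℝ)).neg.congr_deriv
      (by field_simp; ring))
    (by simpa using (integrable_pow_mul_gaussianPDFReal_zero hv 1).integrableOn) hlim
  rwa [integral_Iic_eq_integral_Iio, sub_zero] at h

lemma integral_Iio_sq_mul_gaussianPDFReal_zero (hv : v ≠ 0) (t : ℝ) :
    ∫ x in Iio t, x ^ 2 * φ x = v * (Φ t - t * φ t) := by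
  have hv' : (v : ℝ) ≠ 0 := by exact_mod_cast hv
  have hlim : Tendsto (fun x => v * (Φ x - x * φ x)) atBot (𝓝 0) := by
    simpa using (tendsto_gaussianCDFReal_atBot.sub
      (tendsto_mul_gaussianPDFReal_zero_atBot hv)).const_mul (v : ℝ)
  have h := integral_Iic_of_hasDerivAt_of_tendsto' (a := t) (f' := fun x => x ^ 2 * φ x)
    (fun x _ => (((hasDerivAt_gaussianCDFReal x).sub ((hasDerivAt_id' x).mul
      (hasDerivAt_gaussianPDFReal 0 v x))).const_mul (v : ℝ)).congr_deriv
      (by field_simp; ring))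
    (integrable_pow_mul_gaussianPDFReal_zero hv 2).integrableOn hlim
  rwa [integral_Iic_eq_integral_Iio, sub_zero] at h

lemma integral_Iio_sub_mul_gaussianPDFReal_zero (hv : v ≠ 0) (t : ℝ) :
    ∫ x in Iio t, (t - x) * φ x = t * Φ t + v * φ t := by
  have h0 := ((integrable_pow_mul_gaussianPDFReal_zero hv 0).const_mul t).integrableOn (s := Iio t)
  have h1 := (integrable_pow_mul_gaussianPDFReal_zero hv 1).integrableOn (s := Iio t)
  simp only [pow_zero, one_mul, pow_one] at h0 h1
  simp only [sub_mul]
  rw [integral_sub h0 h1, integral_const_mul, integral_Iio_mul_gaussianPDFReal_zero hv,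
    gaussianCDFReal]
  ring

lemma integral_Iio_sub_sq_mul_gaussianPDFReal_zero (hv : v ≠ 0) (t : ℝ) :
    ∫ x in Iio t, (t - x) ^ 2 * φ x = (v + t ^ 2) * Φ t + t * v * φ t := by
  have h0 := ((integrable_pow_mul_gaussianPDFReal_zero hv 0).const_mul (t ^ 2)).integrableOn
    (s := Iio t)
  have h1 := ((integrable_pow_mul_gaussianPDFReal_zero hv 1).const_mul (2 * t)).integrableOn
    (s := Iio t)
  have h2 := (integrable_pow_mul_gaussianPDFReal_zero hv 2).integrableOn (s := Iio t)
  simp only [pow_zero, one_mul, pow_one] at h0 h1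
  have hexpand (x : ℝ) : (t - x) ^ 2 * φ x = t ^ 2 * φ x - 2 * t * (x * φ x) + x ^ 2 * φ x := by
    ring
  simp only [hexpand]
  rw [integral_add (by exact h0.sub h1) h2, integral_sub h0 h1, integral_const_mul,
    integral_const_mul, integral_Iio_mul_gaussianPDFReal_zero hv,
    integral_Iio_sq_mul_gaussianPDFReal_zero hv, gaussianCDFReal]
  ring

lemma gaussianPDFReal_mul_lt_gaussianCDFReal_sq (hv : v ≠ 0) (t : ℝ) :
    φ t * (t * Φ t + v * φ t) < Φ t ^ 2 := by
  have hv' : (v : ℝ) ≠ 0 := by exact_mod_cast hv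
  have hsecond (x : ℝ) : 0 < (v + x ^ 2) * Φ x + x * v * φ x := by
    rw [← integral_Iio_sub_sq_mul_gaussianPDFReal_zero hv]
    refine setIntegral_Iio_pos ?_ fun y hy => by
      have := gaussianPDFReal_pos 0 v y hv
      have : 0 < x - y := sub_pos.2 hy
      positivity
    refine ((((integrable_pow_mul_gaussianPDFReal_zero hv 0).const_mul (x ^ 2)).sub
      ((integrable_pow_mul_gaussianPDFReal_zero hv 1).const_mul (2 * x))).add
      (integrable_pow_mul_gaussianPDFReal_zero hv 2)).integrableOn.congr_fun
      (fun y _ => by simp only [Pi.add_apply, Pi.sub_apply]; ring) measurableSet_Iio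
  have hderiv (x : ℝ) : HasDerivAt (fun y => Φ y ^ 2 - φ y * (y * Φ y + v * φ y))
      (φ x / v * ((v + x ^ 2) * Φ x + x * v * φ x)) x := by
    have hφ := hasDerivAt_gaussianPDFReal 0 v x
    refine (((hasDerivAt_gaussianCDFReal x).pow 2).sub (hφ.fun_mul (((hasDerivAt_id' x).fun_mul
      (hasDerivAt_gaussianCDFReal x)).fun_add (hφ.const_mul (v : ℝ))))).congr_deriv ?_
    field_simp
    ring
  have hlim : Tendsto (fun y => Φ y ^ 2 - φ y * (y * Φ y + v * φ y)) atBot (𝓝 0) := by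
    have hφ := tendsto_gaussianPDFReal_zero_atBot hv
    simpa using (tendsto_gaussianCDFReal_atBot.pow 2).sub
      (((tendsto_mul_gaussianPDFReal_zero_atBot hv).mul tendsto_gaussianCDFReal_atBot).add
        ((hφ.mul hφ).const_mul (v : ℝ))) |>.congr fun y => by ring
  linarith [pos_of_hasDerivAt_pos_of_tendsto_atBot hderiv
    (fun x => mul_pos (div_pos (gaussianPDFReal_pos 0 v x hv) (by positivity)) (hsecond x))
    hlim t]

lemma meanGapBelow_gaussianReal_zero (hv : v ≠ 0) (t : ℝ) :
    meanGapBelow (gaussianReal 0 v) t = (t * Φ t + v * φ t) / Φ t := by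
  rw [meanGapBelow, setIntegral_gaussianReal hv measurableSet_Iio,
    integral_Iio_sub_mul_gaussianPDFReal_zero hv, gaussianReal_apply_eq_integral _ hv,
    ← gaussianCDFReal, ENNReal.toReal_ofReal (gaussianCDFReal_pos hv t).le]

lemma strictMono_meanGapBelow_gaussianReal_zero (hv : v ≠ 0) :
    StrictMono (meanGapBelow (gaussianReal 0 v)) := by
  have hv' : (v : ℝ) ≠ 0 := by exact_mod_cast hv
  have hnum (t : ℝ) : HasDerivAt (fun u => u * Φ u + v * φ u) (Φ t) t :=
    (((hasDerivAt_id' t).fun_mul (hasDerivAt_gaussianCDFReal t)).fun_add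
      ((hasDerivAt_gaussianPDFReal 0 v t).const_mul (v : ℝ))).congr_deriv (by field_simp; ring)
  rw [funext (meanGapBelow_gaussianReal_zero hv)]
  refine strictMono_of_hasDerivAt_pos (fun t => (hnum t).div (hasDerivAt_gaussianCDFReal t)
    (gaussianCDFReal_pos hv t).ne') fun t => div_pos ?_ (pow_pos (gaussianCDFReal_pos hv t) 2)
  nlinarith [gaussianPDFReal_mul_lt_gaussianCDFReal_sq hv t]

end Centered

theorem stmt8_general (μa μd s : ℝ) (σ2 : NNReal) (hσ2 : σ2 ≠ 0)
    (hμ : μd < μa) :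
    (∫ x in Iio s, (s - x) ∂(gaussianReal μa σ2)) /
        ((gaussianReal μa σ2) (Iio s)).toReal
      < (∫ x in Iio s, (s - x) ∂(gaussianReal μd σ2)) /
          ((gaussianReal μd σ2) (Iio s)).toReal := by
  have hshift (μ : ℝ) :
      meanGapBelow (gaussianReal μ σ2) s = meanGapBelow (gaussianReal 0 σ2) (s - μ) := by
    rw [← meanGapBelow_map_add_const, gaussianReal_map_add_const, zero_add]
  change meanGapBelow _ s < meanGapBelow _ s
  rw [hshift, hshift]
  exact strictMono_meanGapBelow_gaussianReal_zero hσ2 (by linarith)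

/-- for Gaussian scores with equal nondegenerate variances and
`μd < μa ≤ s`, the expected distance to the decision boundary among the
negatively classified is strictly larger for the disadvantaged population:
`E[s - Xd | Xd < s] > E[s - Xa | Xa < s]`. -/
theorem stmt8 (μa μd s : ℝ) (σ2 : NNReal) (hσ2 : σ2 ≠ 0)
    (hμ : μd < μa) (hμs : μa ≤ s) :
    (∫ x in Iio s, (s - x) ∂(gaussianReal μa σ2)) /
        ((gaussianReal μa σ2) (Iio s)).toReal
      < (∫ x in Iio s, (s - x) ∂(gaussianReal μd σ2)) /
          ((gaussianReal μd σ2) (Iio s)).toReal :=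
  stmt8_general μa μd s σ2 hσ2 hμ
end

section
/- If the score distributions of P^a and P^d are identical finite multisets (same sorted sequence of scores), then CNS with k/2 from each population selects a set whose total score equals the maximum total score achievable by any size-k subset containing exactly k/2 members of each population, and moreover equals the unconstrained top-k total when ties are broken suitably. -/
/-!
Within one population the top-`k/2` set beats every other `k/2`-subset: the elements it gains
are each dominated by every element it loses. Across populations, if `x ∈ Sa` scored below some
`y ∈ Pd \ Sd`, then with `t := score y` the superlevel set `{score ≥ t}` would have fewer than
`k/2` elements in `Pa` but more than `k/2` in `Pd`, which is impossible for equal score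
multisets. Hence `Sa ∪ Sd` is itself an unconstrained top-`k` set.
-/

open Finset

section

variable {α β : Type*}

theorem Finset.sum_le_sum_of_card_eq_of_forall_le [AddCommMonoid β] [LinearOrder β]
    [IsOrderedAddMonoid β] {s t : Finset α} {f : α → β} (hcard : #s = #t)
    (hle : ∀ y ∈ s, ∀ x ∈ t, f y ≤ f x) : ∑ y ∈ s, f y ≤ ∑ x ∈ t, f x := by
  rcases t.eq_empty_or_nonempty with rfl | ht
  · rw [card_eq_zero.mp hcard]
  · calc ∑ y ∈ s, f y ≤ #s • t.inf' ht f :=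
          sum_le_card_nsmul _ _ _ fun y hy => le_inf' ht f fun x hx => hle y hy x hx
      _ = #t • t.inf' ht f := by rw [hcard]
      _ ≤ ∑ x ∈ t, f x := card_nsmul_le_sum _ _ _ fun x hx => inf'_le f hx

theorem card_filter_eq_of_map_eq {f : α → β} {P Q : Finset α} (hPQ : P.val.map f = Q.val.map f)
    (p : β → Prop) [DecidablePred p] : #(P.filter (p ∘ f)) = #(Q.filter (p ∘ f)) := by
  have := congrArg (fun m => Multiset.card (m.filter p)) hPQ
  simpa only [Multiset.filter_map, Multiset.card_map, ← filter_val, card_val] using this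

variable [DecidableEq α]

def IsTopSubset [LE β] (f : α → β) (S P : Finset α) : Prop :=
  ∀ x ∈ S, ∀ y ∈ P \ S, f y ≤ f x

theorem IsTopSubset.sum_le [AddCommMonoid β] [LinearOrder β] [IsOrderedAddMonoid β]
    {f : α → β} {S P B : Finset α} (htop : IsTopSubset f S P) (hB : B ⊆ P) (hcard : #B = #S) :
    ∑ x ∈ B, f x ≤ ∑ x ∈ S, f x := by
  have hcard_sdiff : #(B \ S) = #(S \ B) := by
    have := card_inter_add_card_sdiff B S
    have := card_inter_add_card_sdiff S B
    rw [inter_comm] at this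
    omega
  have hsdiff : ∑ x ∈ B \ S, f x ≤ ∑ x ∈ S \ B, f x :=
    sum_le_sum_of_card_eq_of_forall_le hcard_sdiff fun y hy x hx =>
      htop x (sdiff_subset hx) y (mem_sdiff.mpr ⟨hB (mem_sdiff.mp hy).1, (mem_sdiff.mp hy).2⟩)
  rw [← sum_inter_add_sum_sdiff B S, ← sum_inter_add_sum_sdiff S B, inter_comm S B]
  exact add_le_add le_rfl hsdiff

theorem IsTopSubset.le_of_map_eq [LinearOrder β] {f : α → β} {S P R Q : Finset α}
    (hPQ : P.val.map f = Q.val.map f) (hRQ : R ⊆ Q) (hcard : #S = #R)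
    (hS : IsTopSubset f S P) (hR : IsTopSubset f R Q) :
    ∀ x ∈ S, ∀ y ∈ Q \ R, f y ≤ f x := by
  intro x hx y hy
  by_contra! hlt
  have hR_lt : R ⊂ Q.filter (fun z => f y ≤ f z) := by
    refine (ssubset_iff_of_subset fun z hz => mem_filter.mpr ⟨hRQ hz, hR z hz y hy⟩).mpr ?_
    exact ⟨y, mem_filter.mpr ⟨(mem_sdiff.mp hy).1, le_rfl⟩, (mem_sdiff.mp hy).2⟩
  have hS_gt : P.filter (fun z => f y ≤ f z) ⊂ S := by
    refine (ssubset_iff_of_subset fun z hz => ?_).mpr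
      ⟨x, hx, fun hx' => (mem_filter.mp hx').2.not_gt hlt⟩
    obtain ⟨hzP, hyz⟩ := mem_filter.mp hz
    by_contra hzS
    exact (hS x hx z (mem_sdiff.mpr ⟨hzP, hzS⟩)).not_gt (hlt.trans_le hyz)
  have := card_filter_eq_of_map_eq hPQ (f y ≤ ·)
  have := card_lt_card hR_lt
  have := card_lt_card hS_gt
  simp only [Function.comp_def] at *
  omega

theorem IsTopSubset.union_of_map_eq [LinearOrder β] {f : α → β} {S P R Q : Finset α}
    (hPQ : P.val.map f = Q.val.map f) (hSP : S ⊆ P) (hRQ : R ⊆ Q) (hcard : #S = #R)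
    (hS : IsTopSubset f S P) (hR : IsTopSubset f R Q) : IsTopSubset f (S ∪ R) (P ∪ Q) := by
  have hSR := hS.le_of_map_eq hPQ hRQ hcard hR
  have hRS := hR.le_of_map_eq hPQ.symm hSP hcard.symm hS
  intro x hx y hy
  simp only [mem_sdiff, mem_union, not_or] at hx hy
  obtain ⟨hyP | hyQ, hyS, hyR⟩ := hy <;> rcases hx with hxS | hxR
  · exact hS x hxS y (mem_sdiff.mpr ⟨hyP, hyS⟩)
  · exact hRS x hxR y (mem_sdiff.mpr ⟨hyP, hyS⟩)
  · exact hSR x hxS y (mem_sdiff.mpr ⟨hyQ, hyR⟩)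
  · exact hR x hxR y (mem_sdiff.mpr ⟨hyQ, hyR⟩)

theorem sum_le_sum_union_of_isTopSubset [AddCommMonoid β] [LinearOrder β]
    [IsOrderedAddMonoid β] {f : α → β} {S P R Q U : Finset α} (hPQ : Disjoint P Q)
    (hSP : S ⊆ P) (hRQ : R ⊆ Q) (hS : IsTopSubset f S P) (hR : IsTopSubset f R Q)
    (hU : U ⊆ P ∪ Q) (hUP : #(U ∩ P) = #S) (hUQ : #(U ∩ Q) = #R) :
    ∑ x ∈ U, f x ≤ ∑ x ∈ S ∪ R, f x := by
  have hUsplit : U = (U ∩ P) ∪ (U ∩ Q) := by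
    rw [← inter_union_distrib_left, inter_eq_left.mpr hU]
  rw [hUsplit, sum_union (hPQ.mono inter_subset_right inter_subset_right),
    sum_union (hPQ.mono hSP hRQ)]
  exact add_le_add (hS.sum_le inter_subset_right hUP) (hR.sum_le inter_subset_right hUQ)

end

theorem stmt16_general {α : Type*} [DecidableEq α] (Pa Pd : Finset α) (score : α → ℝ)
    (hdisj : Disjoint Pa Pd)
    (hident : Multiset.map score Pa.val = Multiset.map score Pd.val)
    (k : ℕ) (hk : Even k)
    (Sa Sd : Finset α)
    (hSaP : Sa ⊆ Pa) (hSdP : Sd ⊆ Pd)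
    (hSacard : Sa.card = k / 2) (hSdcard : Sd.card = k / 2)
    (hSatop : ∀ x ∈ Sa, ∀ y ∈ Pa \ Sa, score y ≤ score x)
    (hSdtop : ∀ x ∈ Sd, ∀ y ∈ Pd \ Sd, score y ≤ score x)
    (S : Finset α) (hS : S = Sa ∪ Sd) :
    (∀ U : Finset α, U ⊆ Pa ∪ Pd → U.card = k →
        (U ∩ Pa).card = k / 2 → (U ∩ Pd).card = k / 2 →
        ∑ x ∈ U, score x ≤ ∑ x ∈ S, score x)
      ∧ ∃ T : Finset α, T ⊆ Pa ∪ Pd ∧ T.card = k ∧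
          (∀ x ∈ T, ∀ y ∈ (Pa ∪ Pd) \ T, score y ≤ score x) ∧
          ∑ x ∈ T, score x = ∑ x ∈ S, score x := by
  subst hS
  have hScard : #(Sa ∪ Sd) = k := by
    rw [card_union_of_disjoint (hdisj.mono hSaP hSdP), hSacard, hSdcard]
    have := Nat.two_mul_div_two_of_even hk
    omega
  refine ⟨fun U hU _ hUa hUd => ?_, Sa ∪ Sd, union_subset_union hSaP hSdP, hScard,
    IsTopSubset.union_of_map_eq hident hSaP hSdP (hSacard.trans hSdcard.symm) hSatop hSdtop, rfl⟩
  exact sum_le_sum_union_of_isTopSubset hdisj hSaP hSdP hSatop hSdtop hU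
    (hUa.trans hSacard.symm) (hUd.trans hSdcard.symm)

/-- if the score multisets of the two disjoint equal-size
populations coincide, then the CNS selection `S = Sa ∪ Sd` (top-`k/2` from each
population) maximizes total score among all size-`k` subsets containing exactly
`k/2` members of each population, and moreover there is a tie-broken
unconstrained top-`k` set `T` whose total score equals that of `S`. -/
theorem stmt16 {α : Type*} [DecidableEq α] (Pa Pd : Finset α) (score : α → ℝ)
    (hdisj : Disjoint Pa Pd) (n : ℕ) (hna : Pa.card = n) (hnd : Pd.card = n)
    (hident : Multiset.map score Pa.val = Multiset.map score Pd.val)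
    (k : ℕ) (hkpos : 0 < k) (hk : Even k) (hkn : k / 2 ≤ n)
    (Sa Sd : Finset α)
    (hSaP : Sa ⊆ Pa) (hSdP : Sd ⊆ Pd)
    (hSacard : Sa.card = k / 2) (hSdcard : Sd.card = k / 2)
    (hSatop : ∀ x ∈ Sa, ∀ y ∈ Pa \ Sa, score y ≤ score x)
    (hSdtop : ∀ x ∈ Sd, ∀ y ∈ Pd \ Sd, score y ≤ score x)
    (S : Finset α) (hS : S = Sa ∪ Sd) :
    (∀ U : Finset α, U ⊆ Pa ∪ Pd → U.card = k →
        (U ∩ Pa).card = k / 2 → (U ∩ Pd).card = k / 2 →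
        ∑ x ∈ U, score x ≤ ∑ x ∈ S, score x)
      ∧ ∃ T : Finset α, T ⊆ Pa ∪ Pd ∧ T.card = k ∧
          (∀ x ∈ T, ∀ y ∈ (Pa ∪ Pd) \ T, score y ≤ score x) ∧
          ∑ x ∈ T, score x = ∑ x ∈ S, score x :=
  stmt16_general Pa Pd score hdisj hident k hk Sa Sd hSaP hSdP hSacard hSdcard hSatop hSdtop S hS
end
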